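/- Let ψ_1,…,ψ_m be unit vectors in ℂⁿ and let (p_j)_{j=1}^m, (q_j)_{j=1}^m be probability vectors with all q_j > 0 such that the matrices ρ = Σ_j p_j |ψ_j⟩⟨ψ_j| and σ = Σ_j q_j |ψ_j⟩⟨ψ_j| are positive definite. Then Σ_{j=1}^m p_j log(p_j/q_j) ≥ Tr[ρ log(√ρ σ⁻¹ √ρ)]; that is, the Kullback–Leibler divergence of the discrete weight vectors dominates the Belavkin–Staszewski relative entropy of the realized states (with the convention 0·log 0 = 0). -/

import Mathlib

open MeasureTheory Matrix
open scoped ENNReal ComplexOrder Classical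

noncomputable section

instance (n : ℕ) : MeasurableSpace (EuclideanSpace ℂ (Fin n)) := borel _
instance (n : ℕ) : BorelSpace (EuclideanSpace ℂ (Fin n)) := ⟨rfl⟩

/-- `ℂⁿ` as a Euclidean (Hilbert) space. -/
abbrev Hn (n : ℕ) := EuclideanSpace ℂ (Fin n)

/-- The unit sphere of `ℂⁿ`, identified with the set of pure states. -/
abbrev Sph (n : ℕ) := Metric.sphere (0 : Hn n) 1

/-- The rank-one matrix `|ψ⟩⟨ψ| = ψ ψ†`. -/
def outer {n : ℕ} (ψ : Fin n → ℂ) : Matrix (Fin n) (Fin n) ℂ :=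
  Matrix.of fun i j => ψ i * (starRingEnd ℂ) (ψ j)

/-- The rank-one matrix `|x⟩⟨y| = x y†`. -/
def outer2 {n : ℕ} (x y : Fin n → ℂ) : Matrix (Fin n) (Fin n) ℂ :=
  Matrix.of fun i j => x i * (starRingEnd ℂ) (y j)

/-- The standard inner product on `ℂⁿ`, antilinear in the first argument. -/
def ip {n : ℕ} (x y : Fin n → ℂ) : ℂ := ∑ i, (starRingEnd ℂ) (x i) * y i

/-- The norm on `ℂⁿ` induced by `ip`. -/
def nrm {n : ℕ} (x : Fin n → ℂ) : ℝ := Real.sqrt (ip x x).re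

/-- `Λ(μ) = ∫ |ψ⟩⟨ψ| dμ(ψ)`, defined entrywise. -/
def Lambda {n : ℕ} (μ : Measure (Sph n)) : Matrix (Fin n) (Fin n) ℂ :=
  Matrix.of fun i j => ∫ ψ, ((ψ : Hn n) i * (starRingEnd ℂ) ((ψ : Hn n) j)) ∂μ

/-- Kullback–Leibler divergence `∫ log(dμ/dν) dμ` if `μ ≪ ν` (with value `⊤` if the
integral does not exist), and `⊤` otherwise. -/
def KLdiv {X : Type*} [MeasurableSpace X] (μ ν : Measure X) : EReal :=
  if μ ≪ ν ∧ Integrable (llr μ ν) μ then ((∫ x, llr μ ν x ∂μ : ℝ) : EReal) else ⊤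

/-- The positive square root of a positive semidefinite matrix (junk value `0` otherwise). -/
def msqrt {n : ℕ} (A : Matrix (Fin n) (Fin n) ℂ) : Matrix (Fin n) (Fin n) ℂ :=
  if h : A.PosSemidef then
    (h.1.eigenvectorUnitary : Matrix (Fin n) (Fin n) ℂ) *
      diagonal ((↑) ∘ (Real.sqrt ·) ∘ h.1.eigenvalues) *
      (star h.1.eigenvectorUnitary : Matrix (Fin n) (Fin n) ℂ)
  else 0

/-- `f` applied to a Hermitian matrix via the continuous functional calculus
(junk value `0` on non-Hermitian matrices). -/
def mcfc {n : ℕ} (f : ℝ → ℝ) (A : Matrix (Fin n) (Fin n) ℂ) : Matrix (Fin n) (Fin n) ℂ :=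
  if h : A.IsHermitian then h.cfc f else 0

/-- The matrix logarithm, via the continuous functional calculus. -/
def mlog {n : ℕ} (A : Matrix (Fin n) (Fin n) ℂ) : Matrix (Fin n) (Fin n) ℂ :=
  mcfc Real.log A

/-- The Belavkin–Staszewski relative entropy `Tr[ρ log(√ρ σ⁻¹ √ρ)]`. -/
def DBS {n : ℕ} (ρ σ : Matrix (Fin n) (Fin n) ℂ) : ℝ :=
  ((ρ * mlog (msqrt ρ * σ⁻¹ * msqrt ρ)).trace).re

/-- The trace distance `½ Tr[√((A−B)†(A−B))]`. -/
def traceDist {n : ℕ} (A B : Matrix (Fin n) (Fin n) ℂ) : ℝ :=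
  (1 / 2) * ((msqrt ((A - B)ᴴ * (A - B))).trace).re

/-- The Fubini–Study distance `arccos |⟨ψ, φ⟩|` between unit vectors. -/
def dFS {n : ℕ} (ψ φ : Hn n) : ℝ := Real.arccos ‖(inner ℂ ψ φ : ℂ)‖

/-- The (closed) support of a measure. -/
def msupport {X : Type*} [TopologicalSpace X] [MeasurableSpace X] (μ : Measure X) : Set X :=
  {x | ∀ U : Set X, IsOpen U → x ∈ U → μ U ≠ 0}

namespace Stmt16Aux

open Set Filter

private lemma hasDeriv_aux (a : ℝ) (ha : 0 < a) :
    ∀ x ∈ Ici (0:ℝ), HasDerivAt (fun t => Real.log (a + t) - Real.log (1 + t))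
      (1/(a+x) - 1/(1+x)) x := by
  intro x hx
  have hx0 : (0:ℝ) ≤ x := hx
  have h1 : HasDerivAt (fun t : ℝ => a + t) 1 x := (hasDerivAt_id x).const_add a
  have h2 : HasDerivAt (fun t : ℝ => 1 + t) 1 x := (hasDerivAt_id x).const_add 1
  have ha1 : a + x ≠ 0 := by positivity
  have ha2 : 1 + x ≠ 0 := by positivity
  have := (h1.log ha1).sub (h2.log ha2)
  exact this

private lemma tendsto_aux (a : ℝ) (ha : 0 < a) :
    Tendsto (fun t => Real.log (a + t) - Real.log (1 + t)) atTop (nhds 0) := by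
  have h : ∀ᶠ t in atTop, Real.log (a + t) - Real.log (1 + t)
      = Real.log (1 + (a - 1)/(1 + t)) := by
    filter_upwards [eventually_ge_atTop (0:ℝ)] with t ht
    have ha1 : a + t ≠ 0 := by positivity
    have ha2 : (1:ℝ) + t ≠ 0 := by positivity
    rw [← Real.log_div ha1 ha2]
    congr 1
    field_simp
    ring
  rw [tendsto_congr' h]
  have h2 : Tendsto (fun t : ℝ => 1 + (a - 1)/(1 + t)) atTop (nhds 1) := by
    have : Tendsto (fun t : ℝ => (a - 1)/(1 + t)) atTop (nhds 0) := by
      apply Tendsto.div_atTop tendsto_const_nhds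
      exact tendsto_atTop_add_const_left _ 1 tendsto_id
    simpa using tendsto_const_nhds.add this
  have := (Real.continuousAt_log (by norm_num)).tendsto.comp h2
  rw [Real.log_one] at this; exact this

lemma g_integrableOn (a : ℝ) (ha : 0 < a) :
    IntegrableOn (fun t => 1/(a+t) - 1/(1+t)) (Ioi (0:ℝ)) := by
  rcases le_total a 1 with h | h
  · refine integrableOn_Ioi_deriv_of_nonneg' (hasDeriv_aux a ha) ?_ (tendsto_aux a ha)
    intro x hx
    have hx0 : (0:ℝ) < x := hx
    have : 1/(1+x) ≤ 1/(a+x) := by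
      apply one_div_le_one_div_of_le (by positivity) (by linarith)
    linarith
  · refine integrableOn_Ioi_deriv_of_nonpos' (hasDeriv_aux a ha) ?_ (tendsto_aux a ha)
    intro x hx
    have hx0 : (0:ℝ) < x := hx
    have : 1/(a+x) ≤ 1/(1+x) := by
      apply one_div_le_one_div_of_le (by positivity) (by linarith)
    linarith

lemma g_integral (a : ℝ) (ha : 0 < a) :
    ∫ t in Ioi (0:ℝ), (1/(a+t) - 1/(1+t)) = - Real.log a := by
  have := integral_Ioi_of_hasDerivAt_of_tendsto'
    (f := fun t => Real.log (a + t) - Real.log (1 + t)) (hasDeriv_aux a ha)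
    (g_integrableOn a ha) (tendsto_aux a ha)
  simpa using this

variable {n m : ℕ}

lemma outer_mulVec (u x : Fin n → ℂ) : outer u *ᵥ x = (star u ⬝ᵥ x) • u := by
  ext i
  simp [outer, mulVec, dotProduct, Finset.mul_sum, mul_comm, mul_left_comm]

lemma dot_outer (w u x : Fin n → ℂ) :
    star w ⬝ᵥ (outer u *ᵥ x) = (star u ⬝ᵥ x) * (starRingEnd ℂ) (star u ⬝ᵥ w) := by
  rw [outer_mulVec, dotProduct_smul]
  have : star w ⬝ᵥ u = (starRingEnd ℂ) (star u ⬝ᵥ w) := by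
    simp [dotProduct, map_sum, mul_comm]
  rw [this, smul_eq_mul]

lemma dot_star_comm (a b : Fin n → ℂ) : star a ⬝ᵥ b = (starRingEnd ℂ) (star b ⬝ᵥ a) := by
  simp [dotProduct, map_sum, mul_comm]

lemma conj_outer (M : Matrix (Fin n) (Fin n) ℂ) (u : Fin n → ℂ) :
    M * outer u * Mᴴ = outer (M *ᵥ u) := by
  ext i j
  simp only [outer, mul_apply, conjTranspose_apply, of_apply, mulVec, dotProduct, map_sum,
    RingHom.map_mul, Finset.mul_sum, Finset.sum_mul, Complex.star_def]
  exact Finset.sum_congr rfl fun a _ => Finset.sum_congr rfl fun b _ => by ring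

lemma trace_mul_outer (A : Matrix (Fin n) (Fin n) ℂ) (u : Fin n → ℂ) :
    (A * outer u).trace = star u ⬝ᵥ (A *ᵥ u) := by
  simp only [trace, diag, mul_apply, outer, of_apply, dotProduct, mulVec, Pi.star_apply,
    Finset.mul_sum, Finset.sum_mul, Complex.star_def]
  exact Finset.sum_congr rfl fun a _ => Finset.sum_congr rfl fun b _ => by ring

lemma mulVec_sum (A : Fin m → Matrix (Fin n) (Fin n) ℂ) (x : Fin n → ℂ) :
    (∑ j, A j) *ᵥ x = ∑ j, (A j) *ᵥ x := by
  ext i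
  simp only [mulVec, dotProduct, Matrix.sum_apply, Finset.sum_mul, Finset.sum_apply]
  rw [Finset.sum_comm]

lemma dot_sum (y : Fin n → ℂ) (v : Fin m → (Fin n → ℂ)) :
    y ⬝ᵥ (∑ j, v j) = ∑ j, y ⬝ᵥ v j := by
  simp only [dotProduct, Finset.sum_apply, Finset.mul_sum]
  rw [Finset.sum_comm]

lemma dot_sum_outer (co : Fin m → ℂ) (u : Fin m → (Fin n → ℂ)) (y z : Fin n → ℂ) :
    star y ⬝ᵥ ((∑ j, co j • outer (u j)) *ᵥ z)
      = ∑ j, co j * ((star (u j) ⬝ᵥ z) * (starRingEnd ℂ) (star (u j) ⬝ᵥ y)) := by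
  rw [mulVec_sum, dot_sum]
  refine Finset.sum_congr rfl fun j _ => ?_
  rw [smul_mulVec, dotProduct_smul, smul_eq_mul, dot_outer]

/-- trace of `A * (V * diagonal d * star V)` as a weighted sum of diagonal entries. -/
lemma trace_conj_diag (A V : Matrix (Fin n) (Fin n) ℂ) (d : Fin n → ℝ) :
    ((A * (V * diagonal (fun k => (d k : ℂ)) * star V)).trace).re
      = ∑ k, d k * ((star V * A * V) k k).re := by
  have h1 : A * (V * diagonal (fun k => (d k : ℂ)) * star V)
      = (A * V * diagonal (fun k => (d k : ℂ))) * star V := by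
    noncomm_ring
  rw [h1, Matrix.trace_mul_comm, Matrix.star_eq_conjTranspose]
  have h2 : Vᴴ * (A * V * diagonal (fun k => (d k : ℂ)))
      = (Vᴴ * A * V) * diagonal (fun k => (d k : ℂ)) := by noncomm_ring
  rw [h2]
  rw [Matrix.trace]
  rw [Complex.re_sum]
  refine Finset.sum_congr rfl fun k _ => ?_
  rw [Matrix.diag_apply, Matrix.mul_diagonal]
  simp [Complex.mul_re, mul_comm]

/-- trace against `ρ = R * R` as a sum of quadratic forms in the columns of `R`. -/
lemma trace_sq_quad (R C : Matrix (Fin n) (Fin n) ℂ) (hR : Rᴴ = R) :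
    ((R * R * C).trace).re
      = ∑ i, (star (fun a => R a i) ⬝ᵥ (C *ᵥ (fun a => R a i))).re := by
  have h1 : R * R * C = R * (R * C) := by noncomm_ring
  rw [h1, Matrix.trace_mul_comm, Matrix.trace, Complex.re_sum]
  refine Finset.sum_congr rfl fun i _ => ?_
  congr 1
  simp only [Matrix.diag_apply, Matrix.mul_apply, dotProduct, mulVec, Pi.star_apply,
    Finset.mul_sum, Finset.sum_mul]
  rw [Finset.sum_comm]
  refine Finset.sum_congr rfl fun a _ => Finset.sum_congr rfl fun b _ => ?_
  have hconj : star (R a i) = R i a := by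
    conv_rhs => rw [← hR]
    simp [Matrix.conjTranspose_apply]
  rw [hconj]
  ring

end Stmt16Aux

/- If `ρ = Σ_j p_j |ψ_j⟩⟨ψ_j|` and `σ = Σ_j q_j |ψ_j⟩⟨ψ_j|` are positive definite, with
`(p_j), (q_j)` probability vectors and all `q_j > 0`, then the classical KL divergence
`Σ_j p_j log(p_j/q_j)` dominates the Belavkin–Staszewski entropy `Tr[ρ log(√ρ σ⁻¹ √ρ)]`
(with the convention `0 log 0 = 0`, which holds definitionally since `Real.log 0 = 0`). -/
set_option maxHeartbeats 1000000 in
open Stmt16Aux Set Filter in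
/-- If `ρ = Σ_j p_j |ψ_j⟩⟨ψ_j|` and `σ = Σ_j q_j |ψ_j⟩⟨ψ_j|` are positive definite, with
`(p_j), (q_j)` probability vectors and all `q_j > 0`, then the classical KL divergence
`Σ_j p_j log(p_j/q_j)` dominates the Belavkin–Staszewski entropy `Tr[ρ log(√ρ σ⁻¹ √ρ)]`
(with the convention `0 log 0 = 0`, which holds definitionally since `Real.log 0 = 0`). -/
theorem stmt16 {n m : ℕ} (ψ : Fin m → (Fin n → ℂ)) (hψn : ∀ j, nrm (ψ j) = 1)
    (p q : Fin m → ℝ)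
    (hp : ∀ j, 0 ≤ p j) (hps : ∑ j, p j = 1)
    (hq : ∀ j, 0 < q j) (hqs : ∑ j, q j = 1)
    (ρ σ : Matrix (Fin n) (Fin n) ℂ)
    (hρeq : ρ = ∑ j, (p j : ℂ) • outer (ψ j))
    (hσeq : σ = ∑ j, (q j : ℂ) • outer (ψ j))
    (hρ : ρ.PosDef) (hσ : σ.PosDef) :
    ((ρ * mlog (msqrt ρ * σ⁻¹ * msqrt ρ)).trace).re
      ≤ ∑ j, p j * Real.log (p j / q j) := by
  classical
  -- unit vectors
  have hψs : ∀ j, star (ψ j) ⬝ᵥ ψ j = 1 := by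
    intro j
    have h1 : star (ψ j) ⬝ᵥ ψ j = ((∑ i, Complex.normSq (ψ j i) : ℝ) : ℂ) := by
      push_cast
      simp only [dotProduct, Pi.star_apply, Complex.star_def,
        Complex.normSq_eq_conj_mul_self]
    have hnn : 0 ≤ ∑ i, Complex.normSq (ψ j i) :=
      Finset.sum_nonneg fun i _ => Complex.normSq_nonneg _
    have h2 : (∑ i, Complex.normSq (ψ j i)) = 1 := by
      have h3 := hψn j
      unfold nrm ip at h3
      have h4 : ((∑ i, (starRingEnd ℂ) (ψ j i) * ψ j i : ℂ)).re
          = ∑ i, Complex.normSq (ψ j i) := by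
        rw [Complex.re_sum]
        refine Finset.sum_congr rfl fun i _ => ?_
        rw [← Complex.normSq_eq_conj_mul_self]
        simp
      rw [h4] at h3
      rw [← Real.sq_sqrt hnn, h3]; norm_num
    rw [h1, h2, Complex.ofReal_one]
  -- square root of ρ
  have hρs : ρ.PosSemidef := hρ.posSemidef
  have hRdef : msqrt ρ = (hρs.1.eigenvectorUnitary : Matrix (Fin n) (Fin n) ℂ) *
      diagonal ((↑) ∘ (Real.sqrt ·) ∘ hρs.1.eigenvalues) *
      (star hρs.1.eigenvectorUnitary : Matrix (Fin n) (Fin n) ℂ) := dif_pos hρs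
  set R : Matrix (Fin n) (Fin n) ℂ := msqrt ρ with hRset
  have hRps : R.IsHermitian := by
    rw [hRdef]
    have hD : (diagonal ((↑) ∘ (Real.sqrt ·) ∘ hρs.1.eigenvalues) :
        Matrix (Fin n) (Fin n) ℂ).IsHermitian := by
      rw [Matrix.IsHermitian, Matrix.diagonal_conjTranspose]; congr 1; funext i; simp
    have := Matrix.isHermitian_mul_mul_conjTranspose
      (hρs.1.eigenvectorUnitary : Matrix (Fin n) (Fin n) ℂ) hD
    simpa [Matrix.star_eq_conjTranspose] using this
  have hRH : Rᴴ = R := hRps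
  have hRR : R * R = ρ := by
    rw [hRdef]
    have hUU : star (hρs.1.eigenvectorUnitary : Matrix (Fin n) (Fin n) ℂ) *
        (hρs.1.eigenvectorUnitary : Matrix (Fin n) (Fin n) ℂ) = 1 :=
      Matrix.mem_unitaryGroup_iff'.mp hρs.1.eigenvectorUnitary.2
    have hsp := hρs.1.spectral_theorem
    rw [Unitary.conjStarAlgAut_apply] at hsp
    conv_rhs => rw [hsp]
    set U : Matrix (Fin n) (Fin n) ℂ := (hρs.1.eigenvectorUnitary : Matrix (Fin n) (Fin n) ℂ)
    set D : Matrix (Fin n) (Fin n) ℂ := diagonal ((↑) ∘ (Real.sqrt ·) ∘ hρs.1.eigenvalues)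
      with hDdef
    calc U * D * star U * (U * D * star U) = U * D * (star U * U) * D * star U := by
          noncomm_ring
      _ = U * (D * D) * star U := by rw [hUU]; noncomm_ring
      _ = _ := by
          rw [hDdef, diagonal_mul_diagonal]; congr 2
          refine congrArg Matrix.diagonal (funext fun i => ?_)
          simp [← Complex.ofReal_mul, Real.mul_self_sqrt (hρs.eigenvalues_nonneg i)]
  have hdetρ : IsUnit ρ.det := hρ.det_pos.ne'.isUnit
  have hdetR : IsUnit R.det := by
    have h : R.det * R.det = ρ.det := by rw [← Matrix.det_mul, hRR]
    exact isUnit_of_mul_isUnit_left (h ▸ hdetρ)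
  have hRiR : R⁻¹ * R = 1 := Matrix.nonsing_inv_mul _ hdetR
  have hRRi : R * R⁻¹ = 1 := Matrix.mul_nonsing_inv _ hdetR
  have hRiH : R⁻¹ᴴ = R⁻¹ := by rw [Matrix.conjTranspose_nonsing_inv, hRH]
  have hdetσ : IsUnit σ.det := hσ.det_pos.ne'.isUnit
  have hσσi : σ * σ⁻¹ = 1 := Matrix.mul_nonsing_inv _ hdetσ
  -- X = √ρ σ⁻¹ √ρ
  set X : Matrix (Fin n) (Fin n) ℂ := R * σ⁻¹ * R with hXdef
  have hσipd : (σ⁻¹).PosDef := hσ.inv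
  have hXpd : X.PosDef := by
    refine Matrix.PosDef.of_dotProduct_mulVec_pos ?_ ?_
    · show Xᴴ = X
      rw [hXdef, Matrix.conjTranspose_mul, Matrix.conjTranspose_mul, hRH, hσipd.1]
      noncomm_ring
    · intro x hx
      have hx' : R *ᵥ x ≠ 0 := by
        intro h0
        apply hx
        have h1 := congrArg (fun v => R⁻¹ *ᵥ v) h0
        simpa [Matrix.mulVec_mulVec, hRiR] using h1
      have h2 := hσipd.dotProduct_mulVec_pos hx'
      have h3 : star x ⬝ᵥ (X *ᵥ x) = star (R *ᵥ x) ⬝ᵥ (σ⁻¹ *ᵥ (R *ᵥ x)) := by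
        rw [hXdef]
        simp only [Matrix.star_mulVec, Matrix.mulVec_mulVec, Matrix.dotProduct_mulVec,
          Matrix.vecMul_vecMul]
        rw [hRH, ← Matrix.mul_assoc]
      rw [h3]; exact h2
  have hX : X.IsHermitian := hXpd.1
  set V : Matrix (Fin n) (Fin n) ℂ := (hX.eigenvectorUnitary : Matrix (Fin n) (Fin n) ℂ)
    with hVdef
  set μ : Fin n → ℝ := hX.eigenvalues with hμdef
  have hμpos : ∀ k, 0 < μ k := fun k => hXpd.eigenvalues_pos k
  have hVsV : star V * V = 1 := Matrix.mem_unitaryGroup_iff'.mp hX.eigenvectorUnitary.2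
  have hVVs : V * star V = 1 := Matrix.mem_unitaryGroup_iff.mp hX.eigenvectorUnitary.2
  have hspec : X = V * Matrix.diagonal (fun k => (μ k : ℂ)) * star V := by
    have := hX.spectral_theorem
    rw [Unitary.conjStarAlgAut_apply] at this
    exact this
  have keyVD : ∀ d₁ d₂ : Fin n → ℂ,
      (V * Matrix.diagonal d₁ * star V) * (V * Matrix.diagonal d₂ * star V)
        = V * Matrix.diagonal (fun k => d₁ k * d₂ k) * star V := by
    intro d₁ d₂
    calc (V * Matrix.diagonal d₁ * star V) * (V * Matrix.diagonal d₂ * star V)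
        = V * Matrix.diagonal d₁ * (star V * V) * Matrix.diagonal d₂ * star V := by
          noncomm_ring
      _ = V * (Matrix.diagonal d₁ * Matrix.diagonal d₂) * star V := by
          rw [hVsV]; noncomm_ring
      _ = _ := by rw [Matrix.diagonal_mul_diagonal]
  set K : Matrix (Fin n) (Fin n) ℂ :=
    V * Matrix.diagonal (fun k => (((μ k)⁻¹ : ℝ) : ℂ)) * star V with hKdef
  have hdiagK : ∀ k, ((((μ k)⁻¹ : ℝ) : ℂ)) * ((μ k : ℝ) : ℂ) = 1 := by
    intro k
    rw [← Complex.ofReal_mul, inv_mul_cancel₀ (hμpos k).ne', Complex.ofReal_one]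
  have hKX : K * X = 1 := by
    rw [hspec, hKdef, keyVD]
    have h1 : (fun k => ((((μ k)⁻¹ : ℝ)) : ℂ) * ((μ k : ℝ) : ℂ)) = fun _ => (1:ℂ) := by
      funext k; exact hdiagK k
    rw [h1, Matrix.diagonal_one, Matrix.mul_one, hVVs]
  have hXK : X * K = 1 := by
    rw [hspec, hKdef, keyVD]
    have h1 : (fun k => ((μ k : ℝ) : ℂ) * ((((μ k)⁻¹ : ℝ)) : ℂ)) = fun _ => (1:ℂ) := by
      funext k; rw [mul_comm]; exact hdiagK k
    rw [h1, Matrix.diagonal_one, Matrix.mul_one, hVVs]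
  have hKeq : R⁻¹ * σ * R⁻¹ = K := by
    have h1 : (R⁻¹ * σ * R⁻¹) * X = 1 := by
      rw [hXdef]
      calc R⁻¹ * σ * R⁻¹ * (R * σ⁻¹ * R) = R⁻¹ * σ * (R⁻¹ * R) * σ⁻¹ * R := by noncomm_ring
        _ = R⁻¹ * (σ * σ⁻¹) * R := by rw [hRiR]; noncomm_ring
        _ = 1 := by rw [hσσi, Matrix.mul_one, hRiR]
    calc R⁻¹ * σ * R⁻¹ = R⁻¹ * σ * R⁻¹ * (X * K) := by rw [hXK, Matrix.mul_one]
      _ = (R⁻¹ * σ * R⁻¹ * X) * K := by noncomm_ring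
      _ = K := by rw [h1, Matrix.one_mul]
  -- decompositions
  set u : Fin m → (Fin n → ℂ) := fun j => R⁻¹ *ᵥ ψ j with hudef
  have houter : ∀ j, R⁻¹ * outer (ψ j) * R⁻¹ = outer (u j) := by
    intro j
    have h := conj_outer R⁻¹ (ψ j)
    rw [hRiH] at h
    exact h
  have hRiρRi : R⁻¹ * ρ * R⁻¹ = 1 := by
    rw [← hRR]
    calc R⁻¹ * (R * R) * R⁻¹ = (R⁻¹ * R) * (R * R⁻¹) := by noncomm_ring
      _ = 1 := by rw [hRiR, hRRi, Matrix.one_mul]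
  have hIdec : (1 : Matrix (Fin n) (Fin n) ℂ) = ∑ j, (p j : ℂ) • outer (u j) := by
    rw [← hRiρRi, hρeq, Finset.mul_sum, Finset.sum_mul]
    refine Finset.sum_congr rfl fun j _ => ?_
    rw [mul_smul_comm, smul_mul_assoc, houter j]
  have hKdec : K = ∑ j, (q j : ℂ) • outer (u j) := by
    rw [← hKeq, hσeq, Finset.mul_sum, Finset.sum_mul]
    refine Finset.sum_congr rfl fun j _ => ?_
    rw [mul_smul_comm, smul_mul_assoc, houter j]
  -- weights
  set w : Fin n → ℝ := fun k => ((star V * ρ * V) k k).re with hwdef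
  have htrouter : ∀ j, (outer (ψ j)).trace = 1 := by
    intro j
    have h := trace_mul_outer (1 : Matrix (Fin n) (Fin n) ℂ) (ψ j)
    rw [Matrix.one_mul, Matrix.one_mulVec, hψs j] at h
    exact h
  have htrρ : ρ.trace = 1 := by
    rw [hρeq, Matrix.trace_sum]
    have h1 : ∀ j, ((p j : ℂ) • outer (ψ j)).trace = (p j : ℂ) := by
      intro j; rw [Matrix.trace_smul, htrouter j, smul_eq_mul, mul_one]
    rw [Finset.sum_congr rfl fun j _ => h1 j]
    have h2 : (∑ j, (p j : ℂ)) = ((∑ j, p j : ℝ) : ℂ) := by push_cast; rfl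
    rw [h2, hps, Complex.ofReal_one]
  have hsumw : ∑ k, w k = 1 := by
    have h1 : star V * ρ * V = star V * (ρ * V) := by noncomm_ring
    have h2 : (star V * ρ * V).trace = ρ.trace := by
      rw [h1, Matrix.trace_mul_comm, Matrix.mul_assoc, hVVs, Matrix.mul_one]
    have h3 : ∑ k, w k = ((star V * ρ * V).trace).re := by
      rw [Matrix.trace, Complex.re_sum]; rfl
    rw [h3, h2, htrρ]; rfl
  -- matrix logarithm of X
  have hmlog : mlog X = V * Matrix.diagonal (fun k => ((Real.log (μ k) : ℝ) : ℂ)) * star V := by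
    unfold mlog mcfc
    rw [dif_pos hX]
    rfl
  have hLHS : ((ρ * mlog X).trace).re = ∑ k, Real.log (μ k) * w k := by
    rw [hmlog]
    exact trace_conj_diag ρ V _
  -- per-t data
  set c : Fin m → ℝ → ℝ := fun j t => (p j)^2 / (q j + t * p j) with hcdef
  set M1 : ℝ → Matrix (Fin n) (Fin n) ℂ :=
    fun t => V * Matrix.diagonal (fun k => ((((μ k)⁻¹ + t)⁻¹ : ℝ) : ℂ)) * star V with hM1def
  set Y : ℝ → Matrix (Fin n) (Fin n) ℂ :=
    fun t => ∑ j, ((c j t : ℝ) : ℂ) • outer (u j) with hYdef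
  have hKM1 : ∀ t : ℝ, 0 < t → K * (M1 t) + ((t:ℝ):ℂ) • (M1 t) = 1 := by
    intro t ht
    have h2 : ((t:ℝ):ℂ) • (M1 t)
        = V * Matrix.diagonal (fun k => ((t:ℝ):ℂ) * ((((μ k)⁻¹ + t)⁻¹ : ℝ) : ℂ)) * star V := by
      simp only [hM1def]
      rw [← smul_mul_assoc, ← mul_smul_comm, ← Matrix.diagonal_smul]
      rfl
    simp only [hM1def, hKdef]
    rw [keyVD]
    simp only [hM1def, hKdef] at h2
    rw [h2, ← Matrix.add_mul, ← Matrix.mul_add, Matrix.diagonal_add]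
    have h3 : (fun k => (((μ k)⁻¹ : ℝ) : ℂ) * ((((μ k)⁻¹ + t)⁻¹ : ℝ) : ℂ)
        + ((t:ℝ):ℂ) * ((((μ k)⁻¹ + t)⁻¹ : ℝ) : ℂ)) = fun _ => (1:ℂ) := by
      funext k
      have h4 : 0 < (μ k)⁻¹ + t := add_pos (inv_pos.mpr (hμpos k)) ht
      have hr : ((μ k)⁻¹ * ((μ k)⁻¹ + t)⁻¹ + t * ((μ k)⁻¹ + t)⁻¹ : ℝ) = 1 := by
        rw [← add_mul, mul_inv_eq_one₀ h4.ne']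
      rw [← Complex.ofReal_mul, ← Complex.ofReal_mul, ← Complex.ofReal_add, hr,
        Complex.ofReal_one]
    rw [h3, Matrix.diagonal_one, Matrix.mul_one, hVVs]
  -- trace identities
  have hKey1 : ∀ t : ℝ, ((ρ * M1 t).trace).re = ∑ k, (((μ k)⁻¹ + t)⁻¹) * w k := by
    intro t
    simp only [hM1def]
    exact trace_conj_diag ρ V _
  have htru : ∀ j, (ρ * outer (u j)).trace = 1 := by
    intro j
    rw [← houter j]
    have h1 : ρ * (R⁻¹ * outer (ψ j) * R⁻¹) = (ρ * R⁻¹ * outer (ψ j)) * R⁻¹ := by noncomm_ring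
    rw [h1, Matrix.trace_mul_comm]
    have h2 : R⁻¹ * (ρ * R⁻¹ * outer (ψ j)) = (R⁻¹ * ρ * R⁻¹) * outer (ψ j) := by noncomm_ring
    rw [h2, hRiρRi, Matrix.one_mul, htrouter j]
  have hKey2 : ∀ t : ℝ, ((ρ * Y t).trace).re = ∑ j, c j t := by
    intro t
    simp only [hYdef]
    rw [Finset.mul_sum, Matrix.trace_sum]
    have h1 : ∀ j, (ρ * ((c j t : ℂ) • outer (u j))).trace = ((c j t : ℝ) : ℂ) := by
      intro j
      rw [mul_smul_comm, Matrix.trace_smul, htru j, smul_eq_mul, mul_one]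
    rw [Finset.sum_congr rfl fun j _ => h1 j, ← Complex.ofReal_sum, Complex.ofReal_re]
  have hKeyTrace : ∀ C : Matrix (Fin n) (Fin n) ℂ,
      ((ρ * C).trace).re = ∑ i, (star (fun a => R a i) ⬝ᵥ (C *ᵥ (fun a => R a i))).re := by
    intro C
    have h := trace_sq_quad R C hRH
    rw [hRR] at h
    exact h
  -- the Cauchy-Schwarz core
  have hquadle : ∀ t : ℝ, 0 < t → ∀ x : Fin n → ℂ,
      (star x ⬝ᵥ (M1 t *ᵥ x)).re ≤ (star x ⬝ᵥ (Y t *ᵥ x)).re := by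
    intro t ht x
    have hqpt : ∀ j, 0 < q j + t * p j := fun j => by nlinarith [hq j, hp j]
    set w' : Fin n → ℂ := M1 t *ᵥ x with hw'
    set e : Fin m → ℂ := fun j => star (u j) ⬝ᵥ x with hedef
    set f : Fin m → ℂ := fun j => star (u j) ⬝ᵥ w' with hfdef
    have hxeq : K *ᵥ w' + ((t:ℝ):ℂ) • w' = x := by
      have h0 := congrArg (fun M : Matrix (Fin n) (Fin n) ℂ => M *ᵥ x) (hKM1 t ht)
      simpa [Matrix.add_mulVec, Matrix.mulVec_mulVec, Matrix.smul_mulVec,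
        Matrix.one_mulVec, hw'] using h0
    have hdotK : star w' ⬝ᵥ (K *ᵥ w')
        = ∑ j, (q j : ℂ) * (f j * (starRingEnd ℂ) (f j)) := by
      conv_lhs => rw [hKdec]
      rw [dot_sum_outer]
    have hdot1 : star w' ⬝ᵥ w' = ∑ j, (p j : ℂ) * (f j * (starRingEnd ℂ) (f j)) := by
      have h0 : star w' ⬝ᵥ ((1 : Matrix (Fin n) (Fin n) ℂ) *ᵥ w')
          = ∑ j, (p j : ℂ) * (f j * (starRingEnd ℂ) (f j)) := by
        rw [hIdec, dot_sum_outer]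
      rw [Matrix.one_mulVec] at h0
      exact h0
    have hS : star w' ⬝ᵥ x = ((∑ j, (q j + t * p j) * Complex.normSq (f j) : ℝ) : ℂ) := by
      rw [← hxeq, dotProduct_add, dotProduct_smul, hdotK, hdot1]
      simp only [smul_eq_mul, Finset.mul_sum, ← Finset.sum_add_distrib, Complex.mul_conj]
      push_cast
      refine Finset.sum_congr rfl fun j _ => by ring
    have hSB : star w' ⬝ᵥ x = ∑ j, (p j : ℂ) * (e j * (starRingEnd ℂ) (f j)) := by
      have h0 : star w' ⬝ᵥ ((1 : Matrix (Fin n) (Fin n) ℂ) *ᵥ x)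
          = ∑ j, (p j : ℂ) * (e j * (starRingEnd ℂ) (f j)) := by
        rw [hIdec, dot_sum_outer]
      rw [Matrix.one_mulVec] at h0
      exact h0
    set s : ℝ := ∑ j, (q j + t * p j) * Complex.normSq (f j) with hsdef
    have hs0 : 0 ≤ s := Finset.sum_nonneg fun j _ =>
      mul_nonneg (le_of_lt (hqpt j)) (Complex.normSq_nonneg _)
    have hquadM : (star x ⬝ᵥ (M1 t *ᵥ x)).re = s := by
      rw [← hw', dot_star_comm, hS]
      simp
    have hc0 : ∀ j, 0 ≤ c j t := by
      intro j
      exact div_nonneg (sq_nonneg _) (le_of_lt (hqpt j))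
    have hquadY : (star x ⬝ᵥ (Y t *ᵥ x)).re = ∑ j, c j t * Complex.normSq (e j) := by
      have h0 : star x ⬝ᵥ (Y t *ᵥ x) = ∑ j, ((c j t : ℝ) : ℂ) * (e j * (starRingEnd ℂ) (e j)) := by
        simp only [hYdef]
        rw [dot_sum_outer]
      rw [h0]
      simp only [Complex.mul_conj, ← Complex.ofReal_mul, ← Complex.ofReal_sum, Complex.ofReal_re]
    rw [hquadM, hquadY]
    set yv : ℝ := ∑ j, c j t * Complex.normSq (e j) with hyvdef
    have hyv0 : 0 ≤ yv := Finset.sum_nonneg fun j _ =>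
      mul_nonneg (hc0 j) (Complex.normSq_nonneg _)
    have hsre : s = (∑ j, (p j : ℂ) * (e j * (starRingEnd ℂ) (f j))).re := by
      rw [← hSB, hS, Complex.ofReal_re]
    have hb1 : s ≤ ∑ j, p j * (‖e j‖ * ‖f j‖) := by
      rw [hsre, Complex.re_sum]
      refine Finset.sum_le_sum fun j _ => ?_
      refine le_trans (Complex.re_le_norm _) (le_of_eq ?_)
      rw [norm_mul, norm_mul, Complex.norm_conj, Complex.norm_of_nonneg (hp j)]
    have hb10 : 0 ≤ ∑ j, p j * (‖e j‖ * ‖f j‖) :=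
      Finset.sum_nonneg fun j _ => mul_nonneg (hp j)
        (mul_nonneg (norm_nonneg _) (norm_nonneg _))
    have hCS := Finset.sum_mul_sq_le_sq_mul_sq Finset.univ
      (fun j => Real.sqrt (q j + t * p j) * ‖f j‖)
      (fun j => (p j / Real.sqrt (q j + t * p j)) * ‖e j‖)
    have hfg : (∑ j, (Real.sqrt (q j + t * p j) * ‖f j‖)
        * ((p j / Real.sqrt (q j + t * p j)) * ‖e j‖))
        = ∑ j, p j * (‖e j‖ * ‖f j‖) := by
      refine Finset.sum_congr rfl fun j _ => ?_
      have hsq : Real.sqrt (q j + t * p j) ≠ 0 := ne_of_gt (Real.sqrt_pos.mpr (hqpt j))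
      field_simp
    have hf2 : (∑ j, (Real.sqrt (q j + t * p j) * ‖f j‖)^2) = s := by
      refine Finset.sum_congr rfl fun j _ => ?_
      rw [mul_pow, Real.sq_sqrt (le_of_lt (hqpt j)), Complex.sq_norm]
    have hg2 : (∑ j, ((p j / Real.sqrt (q j + t * p j)) * ‖e j‖)^2) = yv := by
      refine Finset.sum_congr rfl fun j _ => ?_
      rw [mul_pow, div_pow, Real.sq_sqrt (le_of_lt (hqpt j)), Complex.sq_norm]
    rw [hfg, hf2, hg2] at hCS
    rcases eq_or_lt_of_le hs0 with h0 | h0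
    · rw [← h0]; exact hyv0
    · nlinarith
  have hKey3 : ∀ t : ℝ, 0 < t →
      (∑ k, (((μ k)⁻¹ + t)⁻¹) * w k) ≤ ∑ j, c j t := by
    intro t ht
    rw [← hKey1 t, ← hKey2 t, hKeyTrace (M1 t), hKeyTrace (Y t)]
    exact Finset.sum_le_sum fun i _ => hquadle t ht _
  -- integration
  have hμinv : ∀ k, 0 < (μ k)⁻¹ := fun k => inv_pos.mpr (hμpos k)
  set a : Fin m → ℝ := fun j => if p j = 0 then 1 else q j / p j with hadef
  have ha : ∀ j, 0 < a j := by
    intro j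
    simp only [hadef]
    split
    · norm_num
    · rename_i h0
      exact div_pos (hq j) ((hp j).lt_of_ne (Ne.symm h0))
  set F : ℝ → ℝ := fun t => ∑ k, w k * (1/((μ k)⁻¹ + t) - 1/(1+t)) with hFdef
  set G : ℝ → ℝ := fun t => ∑ j, p j * (1/(a j + t) - 1/(1+t)) with hGdef
  have hFik : ∀ k : Fin n, IntegrableOn (fun t => w k * (1/((μ k)⁻¹ + t) - 1/(1+t))) (Ioi 0) :=
    fun k => (g_integrableOn _ (hμinv k)).const_mul _
  have hGij : ∀ j : Fin m, IntegrableOn (fun t => p j * (1/(a j + t) - 1/(1+t))) (Ioi 0) :=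
    fun j => (g_integrableOn _ (ha j)).const_mul _
  have hFint : IntegrableOn F (Ioi 0) := by
    simp only [hFdef]
    exact integrable_finset_sum _ fun k _ => hFik k
  have hGint : IntegrableOn G (Ioi 0) := by
    simp only [hGdef]
    exact integrable_finset_sum _ fun j _ => hGij j
  have hFval : ∫ t in Ioi (0:ℝ), F t = ∑ k, w k * Real.log (μ k) := by
    simp only [hFdef]
    rw [integral_finset_sum _ fun k _ => hFik k]
    refine Finset.sum_congr rfl fun k _ => ?_
    rw [MeasureTheory.integral_const_mul, g_integral _ (hμinv k), Real.log_inv]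
    ring
  have hGval : ∫ t in Ioi (0:ℝ), G t = ∑ j, p j * Real.log (p j / q j) := by
    simp only [hGdef]
    rw [integral_finset_sum _ fun j _ => hGij j]
    refine Finset.sum_congr rfl fun j _ => ?_
    rw [MeasureTheory.integral_const_mul, g_integral _ (ha j)]
    rcases eq_or_ne (p j) 0 with h0 | h0
    · simp [h0]
    · have hpj : 0 < p j := (hp j).lt_of_ne (Ne.symm h0)
      simp only [hadef, if_neg h0]
      rw [Real.log_div (hq j).ne' h0, Real.log_div h0 (hq j).ne']
      ring
  have hle : ∀ t ∈ Ioi (0:ℝ), F t ≤ G t := by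
    intro t ht
    have ht' : (0:ℝ) < t := ht
    have h1t : (0:ℝ) < 1 + t := by linarith
    have hFt : F t = (∑ k, (((μ k)⁻¹ + t)⁻¹) * w k) - 1/(1+t) := by
      simp only [hFdef, mul_sub]
      rw [Finset.sum_sub_distrib]
      congr 1
      · refine Finset.sum_congr rfl fun k _ => ?_
        rw [one_div]
        ring
      · rw [← Finset.sum_mul, hsumw]
        ring
    have hGt : G t = (∑ j, c j t) - 1/(1+t) := by
      simp only [hGdef, mul_sub]
      rw [Finset.sum_sub_distrib]
      congr 1
      · refine Finset.sum_congr rfl fun j _ => ?_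
        simp only [hcdef, hadef]
        rcases eq_or_ne (p j) 0 with h0 | h0
        · simp [h0]
        · have hpj : 0 < p j := (hp j).lt_of_ne (Ne.symm h0)
          rw [if_neg h0]
          have hqt : 0 < q j + t * p j := by nlinarith [hq j]
          field_simp
      · rw [← Finset.sum_mul, hps]
        ring
    rw [hFt, hGt]
    have := hKey3 t ht'
    linarith
  calc ((ρ * mlog X).trace).re
      = ∑ k, Real.log (μ k) * w k := hLHS
    _ = ∑ k, w k * Real.log (μ k) := by
        exact Finset.sum_congr rfl fun k _ => mul_comm _ _
    _ = ∫ t in Ioi (0:ℝ), F t := hFval.symm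
    _ ≤ ∫ t in Ioi (0:ℝ), G t :=
        setIntegral_mono_on hFint hGint measurableSet_Ioi hle
    _ = ∑ j, p j * Real.log (p j / q j) := hGval

end
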